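/- Let π* be an allocation of mixed goods minimizing a symmetric strictly convex function Φ of the utility vector, where all divisible goods are identical. If two agents i, i' both receive a positive fraction of divisible goods (π*_i(C) > 0 and π*_{i'}(C) > 0) and both desire the divisible goods, then π*_i(E) = π*_{i'}(E). -/
import Mathlib


open Finset

/-- An allocation of mixed goods: each indivisible good (`Sum.inl m`) is allocated
integrally, each good is fully distributed, and agents receive only goods they value. -/
def IsAlloc {N M C : Type*} [Fintype N] [Fintype M] [Fintype C]
    (v : N → M ⊕ C → ℝ) (π : N → M ⊕ C → ℝ) : Prop :=
  (∀ i g, 0 ≤ π i g) ∧ (∀ g, ∑ i, π i g = 1) ∧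
  (∀ i g, v i g = 0 → π i g = 0) ∧
  (∀ i (m : M), π i (Sum.inl m) = 0 ∨ π i (Sum.inl m) = 1)

/-- The utility of agent `i`. -/
def utilE {N M C : Type*} [Fintype N] [Fintype M] [Fintype C]
    (v : N → M ⊕ C → ℝ) (π : N → M ⊕ C → ℝ) (i : N) : ℝ :=
  ∑ g, v i g * π i g

lemma key_transfer {N M C : Type*} [Fintype N] [Fintype M] [Fintype C] [DecidableEq N]
    (v : N → M ⊕ C → ℝ)
    (Φ : (N → ℝ) → ℝ)
    (hsym : ∀ (σ : Equiv.Perm N) (z : N → ℝ), Φ (z ∘ σ) = Φ z)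
    (hconv : StrictConvexOn ℝ Set.univ Φ)
    (πs : N → M ⊕ C → ℝ) (hπs : IsAlloc v πs)
    (hmin : ∀ π : N → M ⊕ C → ℝ, IsAlloc v π → Φ (utilE v πs) ≤ Φ (utilE v π))
    (i i' : N)
    (hdes : ∀ c : C, v i (Sum.inr c) = 1) (hdes' : ∀ c : C, v i' (Sum.inr c) = 1)
    (hpos : 0 < ∑ c : C, πs i (Sum.inr c)) :
    ¬ (utilE v πs i' < utilE v πs i) := by
  classical
  intro hlt
  set u := utilE v πs with hu
  have hne : i ≠ i' := by rintro rfl; exact lt_irrefl _ hlt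
  obtain ⟨c0, hc0⟩ : ∃ c : C, 0 < πs i (Sum.inr c) := by
    by_contra h
    push_neg at h
    exact absurd (Finset.sum_nonpos (fun c _ => h c)) (not_le.mpr hpos)
  set ε : ℝ := min (πs i (Sum.inr c0)) ((u i - u i') / 2) with hε
  have hεpos : 0 < ε := lt_min hc0 (by linarith)
  have hεle : ε ≤ πs i (Sum.inr c0) := min_le_left _ _
  have hεlt : ε < u i - u i' := lt_of_le_of_lt (min_le_right _ _) (by linarith)
  set δ : N → ℝ := fun j => (if j = i' then ε else 0) - (if j = i then ε else 0) with hδ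
  have hδi : δ i = -ε := by simp [hδ, hne]
  have hδi' : δ i' = ε := by simp [hδ, hne.symm]
  have hδo : ∀ j, j ≠ i → j ≠ i' → δ j = 0 := by intro j h1 h2; simp [hδ, h1, h2]
  set π' : N → M ⊕ C → ℝ :=
    fun j g => πs j g + (if g = Sum.inr c0 then δ j else 0) with hπ'
  obtain ⟨hnn, hsum, hval, hind⟩ := hπs
  have hπ'alloc : IsAlloc v π' := by
    refine ⟨?_, ?_, ?_, ?_⟩
    · intro j g
      by_cases hg : g = Sum.inr c0
      · by_cases h1 : j = i
        · simp only [hπ', hg, h1, hδi, if_pos rfl, if_true]; linarith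
        · by_cases h2 : j = i'
          · simp only [hπ', hg, h2, hδi', if_pos rfl, if_true]
            have := hnn i' (Sum.inr c0); linarith
          · simp only [hπ', hg, hδo j h1 h2, if_pos rfl, if_true, add_zero]
            exact hnn j _
      · simp [hπ', hg]; exact hnn j g
    · intro g
      by_cases hg : g = Sum.inr c0
      · subst hg
        have : ∑ j, π' j (Sum.inr c0) = (∑ j, πs j (Sum.inr c0)) + ∑ j, δ j := by
          simp [hπ', Finset.sum_add_distrib]
        rw [this, hsum]
        have : ∑ j, δ j = 0 := by
          simp [hδ, Finset.sum_sub_distrib, Finset.sum_ite_eq']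
        rw [this]; ring
      · simp [hπ', hg]; exact hsum g
    · intro j g hv
      by_cases hg : g = Sum.inr c0
      · subst hg
        have h1 : j ≠ i := by rintro rfl; rw [hdes c0] at hv; norm_num at hv
        have h2 : j ≠ i' := by rintro rfl; rw [hdes' c0] at hv; norm_num at hv
        simp [hπ', hδo j h1 h2]; exact hval j _ hv
      · simp [hπ', hg]; exact hval j g hv
    · intro j m; simp [hπ']; exact hind j m
  have hutil : utilE v π' = fun j => u j + v j (Sum.inr c0) * δ j := by
    funext j
    simp only [utilE, hπ', mul_add, Finset.sum_add_distrib]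
    congr 1
    have : ∀ g ∈ (Finset.univ : Finset (M ⊕ C)),
        v j g * (if g = Sum.inr c0 then δ j else 0)
        = if g = Sum.inr c0 then v j (Sum.inr c0) * δ j else 0 := by
      intro g _; split_ifs with h <;> simp [h]
    rw [Finset.sum_congr rfl this, Finset.sum_ite_eq' Finset.univ (Sum.inr c0)]
    simp
  have hutil' : utilE v π' = fun j => u j + δ j := by
    rw [hutil]; funext j
    by_cases h1 : j = i
    · rw [h1, hdes c0]; ring
    · by_cases h2 : j = i'
      · rw [h2, hdes' c0]; ring
      · rw [hδo j h1 h2]; ring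
  set w : N → ℝ := u ∘ Equiv.swap i i' with hw
  have hΦw : Φ w = Φ u := hsym _ u
  have hwi : w i = u i' := by simp [hw, Equiv.swap_apply_left]
  have hwi' : w i' = u i := by simp [hw, Equiv.swap_apply_right]
  have huw : u ≠ w := by
    intro h
    have := congrFun h i
    rw [hwi] at this; linarith
  set t : ℝ := ε / (u i - u i') with ht
  have htpos : 0 < t := div_pos hεpos (by linarith)
  have htlt : t < 1 := (div_lt_one (by linarith)).mpr hεlt
  have hne0 : u i - u i' ≠ 0 := by linarith
  have hteq : t * (u i - u i') = ε := by
    rw [ht, div_mul_cancel₀ _ hne0]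
  have hcomb : utilE v π' = (1 - t) • u + t • w := by
    rw [hutil']; funext j
    by_cases h1 : j = i
    · rw [h1]
      simp only [Pi.add_apply, Pi.smul_apply, smul_eq_mul, hwi, hδi]
      linear_combination hteq
    · by_cases h2 : j = i'
      · rw [h2]
        simp only [Pi.add_apply, Pi.smul_apply, smul_eq_mul, hwi', hδi']
        linear_combination -hteq
      · simp only [Pi.add_apply, Pi.smul_apply, smul_eq_mul, hδo j h1 h2]
        have hwj : w j = u j := by
          simp [hw, Equiv.swap_apply_of_ne_of_ne h1 h2]
        rw [hwj]; ring
  have hstrict : Φ (utilE v π') < Φ u := by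
    rw [hcomb]
    calc Φ ((1 - t) • u + t • w) < (1 - t) * Φ u + t * Φ w :=
          hconv.2 (Set.mem_univ u) (Set.mem_univ w) huw (by linarith) htpos (by ring)
      _ = Φ u := by rw [hΦw]; ring
  exact absurd (hmin π' hπ'alloc) (not_le.mpr hstrict)


/-- in a Φ-fair allocation of mixed goods with identical divisible
goods, any two agents who desire the divisible goods and receive a positive fraction
of them have equal utilities. -/
theorem stmt_18 {N M C : Type*} [Fintype N] [Fintype M] [Fintype C] [DecidableEq N]
    (v : N → M ⊕ C → ℝ) (hbin : ∀ i g, v i g = 0 ∨ v i g = 1)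
    (hident : ∀ (i : N) (c c' : C), v i (Sum.inr c) = v i (Sum.inr c'))
    (Φ : (N → ℝ) → ℝ)
    (hsym : ∀ (σ : Equiv.Perm N) (z : N → ℝ), Φ (z ∘ σ) = Φ z)
    (hconv : StrictConvexOn ℝ Set.univ Φ)
    (πs : N → M ⊕ C → ℝ) (hπs : IsAlloc v πs)
    (hmin : ∀ π : N → M ⊕ C → ℝ, IsAlloc v π → Φ (utilE v πs) ≤ Φ (utilE v π))
    (i i' : N)
    (hdes : ∀ c : C, v i (Sum.inr c) = 1) (hdes' : ∀ c : C, v i' (Sum.inr c) = 1)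
    (hpos : 0 < ∑ c : C, πs i (Sum.inr c)) (hpos' : 0 < ∑ c : C, πs i' (Sum.inr c)) :
    utilE v πs i = utilE v πs i' := by
  
  rcases lt_trichotomy (utilE v πs i) (utilE v πs i') with h | h | h
  · exact absurd h (key_transfer v Φ hsym hconv πs hπs hmin i' i hdes' hdes hpos')
  · exact h
  · exact absurd h (key_transfer v Φ hsym hconv πs hπs hmin i i' hdes hdes' hpos)
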